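/- arXiv:2309.16590 — 5 statements merged into one kernel-verified Lean document; each statement's English description precedes it below -/
import Mathlib

section
/- Let α and β be positive real numbers, and let G be a finite group acting faithfully and quasiprimitively on a finite set Ω (that is, G is transitive on Ω and every nontrivial normal subgroup of G is transitive on Ω). Suppose that there exists a nontrivial element x ∈ G whose support has size at most (1−α)|Ω|, and that the point stabilizer G_ω has order at most β for every ω ∈ Ω. Then |G| ≤ ⌈β/α⌉!. -/
/-!
A nontrivial `x` fixes at least `α|Ω|` points, and so does each of its conjugates. Counting
pairs `(c, ω)` with `c` conjugate to `x` and `c • ω = ω` gives `|x^G| · α|Ω| ≤ |Ω| β`, so the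
conjugacy class `x^G` has at most `β / α` elements. The kernel of the conjugation action of `G`
on `x^G` is a normal subgroup centralising `x`; were it nontrivial it would be transitive, and
then `x`, which fixes a point, would fix every point. Hence `G` embeds in `Sym(x^G)`.
-/

open Finset

namespace MulAction

variable {G Ω : Type*} [Group G] [MulAction G Ω]

theorem natCard_fixedBy_eq_of_isConj {g h : G} (hgh : IsConj g h) :
    Nat.card (fixedBy Ω g) = Nat.card (fixedBy Ω h) := by
  obtain ⟨c, rfl⟩ := isConj_iff.mp hgh
  rw [← smul_fixedBy, Set.natCard_smul_set]

theorem eq_one_of_commute_of_isPretransitive [FaithfulSMul G Ω] (H : Subgroup G)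
    [IsPretransitive H Ω] {x : G} (hx : ∀ h ∈ H, Commute h x) {a : Ω} (ha : x • a = a) :
    x = 1 := by
  refine eq_of_smul_eq_smul (α := Ω) fun b ↦ ?_
  obtain ⟨h, rfl⟩ := exists_smul_eq H a b
  rw [one_smul, Subgroup.smul_def, ← mul_smul, ← (hx h h.2).eq, mul_smul, ha]

theorem natCard_orbit_conjAct_mul_natCard_fixedBy_le [Finite G] [Fintype Ω] (x : G) :
    Nat.card (orbit (ConjAct G) x) * Nat.card (fixedBy Ω x) ≤
      ∑ ω : Ω, Nat.card (stabilizer G ω) := by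
  classical
  have := Fintype.ofFinite G
  let fixes (c : G) (ω : Ω) : Prop := c • ω = ω
  let conj : Finset G := {c | IsConj c x}
  have hconj : Nat.card (orbit (ConjAct G) x) = #conj := by
    rw [← Nat.card_eq_finsetCard]; congr; ext; simp [conj]
  have hfix (c : G) : #(univ.bipartiteAbove fixes c) = Nat.card (fixedBy Ω c) := by
    rw [← Nat.card_eq_finsetCard]; congr; ext; simp [fixes, bipartiteAbove]
  have hstab (ω : Ω) : #(conj.bipartiteBelow fixes ω) ≤ Nat.card (stabilizer G ω) := by
    rw [← SetLike.coe_sort_coe, ← Nat.card_eq_finsetCard]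
    exact Nat.card_mono (Set.toFinite _) fun c hc ↦ (mem_filter.mp hc).2
  calc Nat.card (orbit (ConjAct G) x) * Nat.card (fixedBy Ω x)
      = ∑ c ∈ conj, #(univ.bipartiteAbove fixes c) := by
        rw [hconj, ← smul_eq_mul, ← sum_const]
        refine sum_congr rfl fun c hc ↦ ?_
        rw [hfix, natCard_fixedBy_eq_of_isConj (mem_filter.mp hc).2]
    _ = ∑ ω : Ω, #(conj.bipartiteBelow fixes ω) :=
        sum_card_bipartiteAbove_eq_sum_card_bipartiteBelow fixes
    _ ≤ ∑ ω : Ω, Nat.card (stabilizer G ω) := sum_le_sum fun ω _ ↦ hstab ω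

theorem natCard_orbit_conjAct_le_div [Finite G] [Fintype Ω] [Nonempty Ω] {x : G} {α β : ℝ}
    (hα : 0 < α) (hfix : α * Fintype.card Ω ≤ Nat.card (fixedBy Ω x))
    (hstab : ∀ ω : Ω, (Nat.card (stabilizer G ω) : ℝ) ≤ β) :
    (Nat.card (orbit (ConjAct G) x) : ℝ) ≤ β / α := by
  have hn : (0 : ℝ) < Fintype.card Ω := by exact_mod_cast Fintype.card_pos
  rw [le_div_iff₀ hα]
  refine le_of_mul_le_mul_left ?_ hn
  calc Fintype.card Ω * (Nat.card (orbit (ConjAct G) x) * α)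
      = Nat.card (orbit (ConjAct G) x) * (α * Fintype.card Ω) := by ring
    _ ≤ Nat.card (orbit (ConjAct G) x) * Nat.card (fixedBy Ω x) := by gcongr
    _ ≤ ((∑ ω : Ω, Nat.card (stabilizer G ω) : ℕ) : ℝ) := by
        exact_mod_cast natCard_orbit_conjAct_mul_natCard_fixedBy_le x
    _ ≤ ∑ _ω : Ω, β := by push_cast; exact sum_le_sum fun ω _ ↦ hstab ω
    _ = Fintype.card Ω * β := by simp

theorem natCard_le_factorial_natCard_orbit_conjAct [Finite G] (x : G)
    (h : ∀ N : Subgroup G, N.Normal → (∀ n ∈ N, Commute n x) → N = ⊥) :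
    Nat.card G ≤ (Nat.card (orbit (ConjAct G) x)).factorial := by
  let φ := (toPermHom (ConjAct G) (orbit (ConjAct G) x)).comp ConjAct.toConjAct.toMonoidHom
  have hker : φ.ker = ⊥ := h _ φ.normal_ker fun g hg ↦ by
    have hgx : g * x * g⁻¹ = x := congr(Subtype.val ($hg ⟨x, mem_orbit_self x⟩))
    exact mul_inv_eq_iff_eq_mul.mp hgx
  rw [← Nat.card_perm]
  exact Nat.card_le_card_of_injective φ (φ.ker_eq_bot_iff.mp hker)

end MulAction

open MulAction

theorem stmt_0_general {Ω : Type*} [Fintype Ω] (α β : ℝ) (hα : 0 < α)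
    (G : Subgroup (Equiv.Perm Ω))
    (hquasi : ∀ N : Subgroup G, N.Normal → N ≠ ⊥ → MulAction.IsPretransitive N Ω)
    (x : G) (hx : x ≠ 1)
    (hsupp : (Nat.card {ω : Ω // (x : Equiv.Perm Ω) ω ≠ ω} : ℝ) ≤ (1 - α) * Fintype.card Ω)
    (hstab : ∀ ω : Ω, (Nat.card (MulAction.stabilizer G ω) : ℝ) ≤ β) :
    Nat.card G ≤ Nat.factorial ⌈β / α⌉₊ := by
  have : Nonempty Ω := not_isEmpty_iff.mp fun _ ↦ hx (Subsingleton.elim _ _)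
  have hfix : α * Fintype.card Ω ≤ Nat.card (fixedBy Ω x) := by
    -- the support of `x` is, definitionally, the complement of `fixedBy Ω x`
    have hsplit : (Nat.card (fixedBy Ω x) : ℝ) + Nat.card {ω : Ω // (x : Equiv.Perm Ω) ω ≠ ω} =
        Fintype.card Ω := by
      exact_mod_cast (Set.ncard_add_ncard_compl (fixedBy Ω x)).trans Nat.card_eq_fintype_card
    linarith
  obtain ⟨a, ha⟩ : (fixedBy Ω x).Nonempty := by
    rw [← Set.ncard_pos]
    exact_mod_cast (mul_pos hα (by exact_mod_cast Fintype.card_pos)).trans_le hfix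
  calc Nat.card G ≤ (Nat.card (orbit (ConjAct G) x)).factorial :=
        natCard_le_factorial_natCard_orbit_conjAct x fun N hN hcomm ↦ by
          by_contra hne
          have := hquasi N hN hne
          exact hx (eq_one_of_commute_of_isPretransitive N hcomm ha)
    _ ≤ (⌈β / α⌉₊).factorial := Nat.factorial_le <| by
        exact_mod_cast (natCard_orbit_conjAct_le_div hα hfix hstab).trans (Nat.le_ceil _)

/-- Let α and β be positive real numbers, and let G be a finite group acting
faithfully and quasiprimitively on a finite set Ω (that is, G is transitive on Ω and every
nontrivial normal subgroup of G is transitive on Ω). Suppose that there exists a nontrivial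
element x ∈ G whose support has size at most (1−α)|Ω|, and that the point stabilizer G_ω has
order at most β for every ω ∈ Ω. Then |G| ≤ ⌈β/α⌉!. -/
theorem stmt_0 {Ω : Type*} [Fintype Ω] (α β : ℝ) (hα : 0 < α) (hβ : 0 < β)
    (G : Subgroup (Equiv.Perm Ω))
    (htrans : MulAction.IsPretransitive G Ω)
    (hquasi : ∀ N : Subgroup G, N.Normal → N ≠ ⊥ → MulAction.IsPretransitive N Ω)
    (x : G) (hx : x ≠ 1)
    (hsupp : (Nat.card {ω : Ω // (x : Equiv.Perm Ω) ω ≠ ω} : ℝ) ≤ (1 - α) * Fintype.card Ω)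
    (hstab : ∀ ω : Ω, (Nat.card (MulAction.stabilizer G ω) : ℝ) ≤ β) :
    Nat.card G ≤ Nat.factorial ⌈β / α⌉₊ :=
  stmt_0_general α β hα G hquasi x hx hsupp hstab
end

section
/- Let m ≥ 3 be an integer and let X, Y, Z, W be m-element subsets of a 2m-element set. Then there exists an even permutation σ of the 2m-element set such that (σ(X) = Z or σ(X) is the complement of Z) and (σ(Y) = W or σ(Y) is the complement of W) if and only if min(|X ∩ Y|, m − |X ∩ Y|) = min(|Z ∩ W|, m − |Z ∩ W|). Consequently, the orbits of Alt(2m) (and likewise of Sym(2m)) on ordered pairs of partitions of the 2m-set into two blocks of size m are classified by this invariant, so the corresponding orbital digraphs are the squashed distance-i Johnson graphs QJ(2m,m,i) for 0 ≤ i ≤ ⌊m/2⌋. -/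
open Finset Equiv

set_option linter.unusedSectionVars false

variable {α : Type*} [Fintype α] [DecidableEq α]

lemma my_exists_perm_fiber {β : Type*} [DecidableEq β] (P Q : α → β)
    (h : ∀ b, Fintype.card {x // P x = b} = Fintype.card {x // Q x = b}) :
    ∃ σ : Equiv.Perm α, ∀ x, Q (σ x) = P x := by
  refine ⟨(Equiv.sigmaFiberEquiv P).symm.trans
    ((Equiv.sigmaCongrRight fun b => Fintype.equivOfCardEq (h b)).trans
      (Equiv.sigmaFiberEquiv Q)), fun x => ?_⟩
  exact ((Fintype.equivOfCardEq (h (P x))) ⟨x, rfl⟩).2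

lemma my_exists_perm_pair (A B C D : Finset α)
    (h1 : A.card = C.card) (h2 : B.card = D.card)
    (h3 : (A ∩ B).card = (C ∩ D).card) :
    ∃ σ : Equiv.Perm α, A.image σ = C ∧ B.image σ = D := by
  have key : ∀ (S T : Finset α) (b : Bool × Bool),
      Fintype.card {x // (fun x => (decide (x ∈ S), decide (x ∈ T))) x = b} =
      (univ.filter fun x => decide (x ∈ S) = b.1 ∧ decide (x ∈ T) = b.2).card := by
    intro S T b
    rw [Fintype.card_subtype]
    congr 1; ext x; simp [Prod.ext_iff]
  have filt : ∀ (S T : Finset α) (b : Bool × Bool),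
      (univ.filter fun x => decide (x ∈ S) = b.1 ∧ decide (x ∈ T) = b.2) =
        (if b.1 then S else Sᶜ) ∩ (if b.2 then T else Tᶜ) := by
    intro S T b
    ext x
    cases hb1 : b.1 <;> cases hb2 : b.2 <;> simp [hb1, hb2]
  have hsd : ∀ (S T : Finset α), Sᶜ ∩ T = T \ S := by
    intro S T; rw [Finset.inter_comm, sdiff_eq]; rfl
  have hsd2 : ∀ (S T : Finset α), S ∩ Tᶜ = S \ T := by
    intro S T; rw [sdiff_eq]; rfl
  have hcc : ∀ (S T : Finset α), Sᶜ ∩ Tᶜ = (S ∪ T)ᶜ := by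
    intro S T; ext x; simp [not_or]
  have hcc' : ∀ (S T : Finset α), Tᶜ \ S = (S ∪ T)ᶜ := by
    intro S T; ext x; simp [not_or, and_comm]
  have hfib : ∀ b, Fintype.card {x // (fun x => (decide (x ∈ A), decide (x ∈ B))) x = b} =
      Fintype.card {x // (fun x => (decide (x ∈ C), decide (x ∈ D))) x = b} := by
    intro b
    rw [key, key, filt, filt]
    have e1 := Finset.card_inter_add_card_sdiff A B
    have e2 := Finset.card_inter_add_card_sdiff C D
    have e3 := Finset.card_inter_add_card_sdiff B A
    have e4 := Finset.card_inter_add_card_sdiff D C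
    have e5 : (B ∩ A).card = (A ∩ B).card := by rw [Finset.inter_comm]
    have e6 : (D ∩ C).card = (C ∩ D).card := by rw [Finset.inter_comm]
    have e7 := Finset.card_union_add_card_inter A B
    have e8 := Finset.card_union_add_card_inter C D
    have e9 : ((A ∪ B)ᶜ).card = Fintype.card α - (A ∪ B).card := Finset.card_compl _
    have e10 : ((C ∪ D)ᶜ).card = Fintype.card α - (C ∪ D).card := Finset.card_compl _
    have e11 := Finset.card_le_univ (A ∪ B)
    have e12 := Finset.card_le_univ (C ∪ D)
    obtain ⟨b1, b2⟩ := b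
    cases b1 <;> cases b2 <;>
      simp only [Bool.false_eq_true, Bool.true_eq_false, if_false, if_true, hsd, hsd2, hcc, hcc', e9, e10] <;> omega
  obtain ⟨σ, hσ⟩ := my_exists_perm_fiber
      (fun x => (decide (x ∈ A), decide (x ∈ B)))
      (fun x => (decide (x ∈ C), decide (x ∈ D))) hfib
  have hmem : ∀ x, (x ∈ A ↔ σ x ∈ C) ∧ (x ∈ B ↔ σ x ∈ D) := by
    intro x
    have := hσ x
    simp only [Prod.ext_iff] at this
    constructor
    · simpa using (decide_eq_decide.mp this.1).symm
    · simpa using (decide_eq_decide.mp this.2).symm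
  have himg : ∀ (S T : Finset α), (∀ x, x ∈ S ↔ σ x ∈ T) → S.image σ = T := by
    intro S T h
    ext y
    simp only [Finset.mem_image]
    constructor
    · rintro ⟨x, hx, rfl⟩; exact (h x).mp hx
    · intro hy; exact ⟨σ.symm y, (h _).mpr (by simpa using hy), by simp⟩
  exact ⟨σ, himg A C fun x => (hmem x).1, himg B D fun x => (hmem x).2⟩

section
set_option linter.unusedSectionVars false

variable {α : Type*} [Fintype α] [DecidableEq α]

lemma my_swap_image_eq (C : Finset α) {a b : α} (h : a ∈ C ↔ b ∈ C) :
    C.image (Equiv.swap a b) = C := by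
  apply Finset.eq_of_subset_of_card_le
  · intro y hy
    simp only [Finset.mem_image] at hy
    obtain ⟨x, hx, rfl⟩ := hy
    rcases eq_or_ne x a with rfl | ha
    · rw [Equiv.swap_apply_left]; exact h.mp hx
    rcases eq_or_ne x b with rfl | hb
    · rw [Equiv.swap_apply_right]; exact h.mpr hx
    · rwa [Equiv.swap_apply_of_ne_of_ne ha hb]
  · rw [Finset.card_image_of_injective _ (Equiv.injective _)]

lemma my_exists_even_perm_pair (A B C D : Finset α)
    (h1 : A.card = C.card) (h2 : B.card = D.card)
    (h3 : (A ∩ B).card = (C ∩ D).card)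
    (hab : ∃ a b : α, a ≠ b ∧ (a ∈ C ↔ b ∈ C) ∧ (a ∈ D ↔ b ∈ D)) :
    ∃ σ : Equiv.Perm α, Equiv.Perm.sign σ = 1 ∧ A.image σ = C ∧ B.image σ = D := by
  obtain ⟨σ, hA, hB⟩ := my_exists_perm_pair A B C D h1 h2 h3
  obtain ⟨a, b, hne, hC, hD⟩ := hab
  rcases Int.units_eq_one_or (Equiv.Perm.sign σ) with hs | hs
  · exact ⟨σ, hs, hA, hB⟩
  · refine ⟨Equiv.swap a b * σ, ?_, ?_, ?_⟩
    · rw [Equiv.Perm.sign_mul, Equiv.Perm.sign_swap hne, hs]; rfl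
    · rw [Equiv.Perm.coe_mul, ← Finset.image_image, hA, my_swap_image_eq C hC]
    · rw [Equiv.Perm.coe_mul, ← Finset.image_image, hB, my_swap_image_eq D hD]

end

/-- Let m ≥ 3 be an integer and let X, Y, Z, W be m-element subsets of a
2m-element set. Then there exists an even permutation σ of the 2m-element set such that
(σ(X) = Z or σ(X) = Zᶜ) and (σ(Y) = W or σ(Y) = Wᶜ) if and only if
min(|X ∩ Y|, m − |X ∩ Y|) = min(|Z ∩ W|, m − |Z ∩ W|). Likewise for arbitrary
permutations. Consequently the orbits of Alt(2m) (and of Sym(2m)) on ordered pairs of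
partitions of the 2m-set into two blocks of size m are classified by this invariant, so the
corresponding orbital digraphs are the squashed distance-i Johnson graphs QJ(2m,m,i). -/
theorem stmt_7 (m : ℕ) (hm : 3 ≤ m) (X Y Z W : Finset (Fin (2 * m)))
    (hX : X.card = m) (hY : Y.card = m) (hZ : Z.card = m) (hW : W.card = m) :
    ((∃ σ : Equiv.Perm (Fin (2 * m)), Equiv.Perm.sign σ = 1 ∧
        (X.image σ = Z ∨ X.image σ = Zᶜ) ∧ (Y.image σ = W ∨ Y.image σ = Wᶜ))
      ↔ min (X ∩ Y).card (m - (X ∩ Y).card) = min (Z ∩ W).card (m - (Z ∩ W).card)) ∧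
    ((∃ σ : Equiv.Perm (Fin (2 * m)),
        (X.image σ = Z ∨ X.image σ = Zᶜ) ∧ (Y.image σ = W ∨ Y.image σ = Wᶜ))
      ↔ min (X ∩ Y).card (m - (X ∩ Y).card) = min (Z ∩ W).card (m - (Z ∩ W).card)) := by
  have hXY : (X ∩ Y).card ≤ m := by
    have := Finset.card_le_card (Finset.inter_subset_left : X ∩ Y ⊆ X); omega
  have hZW : (Z ∩ W).card ≤ m := by
    have := Finset.card_le_card (Finset.inter_subset_left : Z ∩ W ⊆ Z); omega
  have hcardu : Fintype.card (Fin (2 * m)) = 2 * m := Fintype.card_fin _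
  have hsd1 : (Z ∩ Wᶜ).card = m - (Z ∩ W).card := by
    have h' : Z ∩ Wᶜ = Z \ W := by rw [sdiff_eq]; rfl
    have hc := congrArg Finset.card h'
    have := Finset.card_inter_add_card_sdiff Z W
    omega
  have hsd2 : (Zᶜ ∩ W).card = m - (Z ∩ W).card := by
    have h' : Zᶜ ∩ W = W \ Z := by rw [Finset.inter_comm, sdiff_eq]; rfl
    have hc := congrArg Finset.card h'
    have := Finset.card_inter_add_card_sdiff W Z
    have h2 : (W ∩ Z).card = (Z ∩ W).card := by rw [Finset.inter_comm]
    omega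
  have hsd3 : (Zᶜ ∩ Wᶜ).card = (Z ∩ W).card := by
    have h' : Zᶜ ∩ Wᶜ = (Z ∪ W)ᶜ := by ext x; simp [not_or]
    have hc := congrArg Finset.card h'
    have h2 := Finset.card_union_add_card_inter Z W
    have h3 : ((Z ∪ W)ᶜ).card = Fintype.card (Fin (2 * m)) - (Z ∪ W).card :=
      Finset.card_compl _
    omega
  have fwd : ∀ σ : Equiv.Perm (Fin (2 * m)),
      (X.image σ = Z ∨ X.image σ = Zᶜ) → (Y.image σ = W ∨ Y.image σ = Wᶜ) →
      min (X ∩ Y).card (m - (X ∩ Y).card) = min (Z ∩ W).card (m - (Z ∩ W).card) := by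
    intro σ h1 h2
    have hinter : (X.image σ ∩ Y.image σ).card = (X ∩ Y).card := by
      rw [← Finset.image_inter _ _ σ.injective,
        Finset.card_image_of_injective _ σ.injective]
    rcases h1 with h1 | h1 <;> rcases h2 with h2 | h2 <;> rw [h1, h2] at hinter <;> omega
  have bwd : min (X ∩ Y).card (m - (X ∩ Y).card) = min (Z ∩ W).card (m - (Z ∩ W).card) →
      ∃ σ : Equiv.Perm (Fin (2 * m)), Equiv.Perm.sign σ = 1 ∧
        (X.image σ = Z ∨ X.image σ = Zᶜ) ∧ (Y.image σ = W ∨ Y.image σ = Wᶜ) := by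
    intro hmin
    obtain ⟨a, b, hne, haZ, haW⟩ :
        ∃ a b : Fin (2 * m), a ≠ b ∧ (a ∈ Z ↔ b ∈ Z) ∧ (a ∈ W ↔ b ∈ W) := by
      have h1 := Finset.card_inter_add_card_sdiff Z W
      rcases le_or_gt 2 (Z ∩ W).card with h | h
      · obtain ⟨a, ha, b, hb, hab⟩ := Finset.one_lt_card.mp (by omega : 1 < (Z ∩ W).card)
        simp only [Finset.mem_inter] at ha hb
        exact ⟨a, b, hab, by tauto, by tauto⟩
      · obtain ⟨a, ha, b, hb, hab⟩ := Finset.one_lt_card.mp (by omega : 1 < (Z \ W).card)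
        simp only [Finset.mem_sdiff] at ha hb
        exact ⟨a, b, hab, by tauto, by tauto⟩
    rcases (by omega : (Z ∩ W).card = (X ∩ Y).card ∨
        (Z ∩ W).card = m - (X ∩ Y).card) with h | h
    · obtain ⟨σ, hs, h1, h2⟩ := my_exists_even_perm_pair X Y Z W
        (by omega) (by omega) (by omega) ⟨a, b, hne, haZ, haW⟩
      exact ⟨σ, hs, Or.inl h1, Or.inl h2⟩
    · have hWc : (Wᶜ).card = m := by
        rw [Finset.card_compl, hcardu, hW]; omega
      obtain ⟨σ, hs, h1, h2⟩ := my_exists_even_perm_pair X Y Z Wᶜ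
        (by omega) (by omega) (by omega)
        ⟨a, b, hne, haZ, by simp only [Finset.mem_compl]; tauto⟩
      exact ⟨σ, hs, Or.inl h1, Or.inr h2⟩
  constructor
  · exact ⟨fun ⟨σ, _, h1, h2⟩ => fwd σ h1 h2, bwd⟩
  · exact ⟨fun ⟨σ, h1, h2⟩ => fwd σ h1 h2,
      fun h => (bwd h).elim fun σ hσ => ⟨σ, hσ.2.1, hσ.2.2⟩⟩
end

section
/- Let Δ be a finite set, r ≥ 1 an integer, and let T ≤ K be subgroups of Sym(Δ) such that T and K have the same orbits on Δ × Δ. Let H be a subgroup of Sym({1,…,r}), and let G be a subgroup of Sym(Δ^r) such that: (1) every element of G is in product-action form with base entries in K and top element in H; (2) G contains every permutation of product-action form with base entries in T and trivial top element; and (3) for every h ∈ H there is an element of G in product-action form with top element h. Then G has the same orbits on Δ^r × Δ^r as the full wreath product K ≀ H in product action (equivalently, as T ≀ H). -/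
/-- The permutation of Δ^r in product-action form with base k = (k_1,…,k_r) ∈ Sym(Δ)^r and
top h ∈ Sym({1,…,r}): it sends u to the tuple whose i-th entry is k_i(u_{h⁻¹(i)}). -/
def paPerm {Δ : Type*} {r : ℕ} (k : Fin r → Equiv.Perm Δ) (h : Equiv.Perm (Fin r)) :
    Equiv.Perm (Fin r → Δ) where
  toFun u i := k i (u (h⁻¹ i))
  invFun u i := (k (h i))⁻¹ (u (h i))
  left_inv u := by funext i; simp
  right_inv u := by funext i; simp

lemma paPerm_apply {Δ : Type*} {r : ℕ} (k : Fin r → Equiv.Perm Δ)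
    (h : Equiv.Perm (Fin r)) (u : Fin r → Δ) (i : Fin r) :
    paPerm k h u i = k i (u (h⁻¹ i)) := rfl

lemma paPerm_top_eq {Δ : Type*} [Nontrivial Δ] {r : ℕ}
    {k k' : Fin r → Equiv.Perm Δ} {h h' : Equiv.Perm (Fin r)}
    (he : paPerm k h = paPerm k' h') : h = h' := by
  have key : ∀ i, h'⁻¹ i = h⁻¹ i := by
    intro i
    by_contra hne
    obtain ⟨a, b, hab⟩ := exists_pair_ne Δ
    have e1 : paPerm k h (fun j => if j = h⁻¹ i then a else b) i
        = paPerm k' h' (fun j => if j = h⁻¹ i then a else b) i := by rw [he]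
    have e2 : paPerm k h (fun _ => b) i = paPerm k' h' (fun _ => b) i := by rw [he]
    rw [paPerm_apply, paPerm_apply] at e1 e2
    simp only [if_pos rfl, if_neg hne] at e1
    exact hab ((k i).injective (e1.trans e2.symm))
  have hinv : h⁻¹ = h'⁻¹ := Equiv.ext fun i => (key i).symm
  exact inv_injective hinv

/-- Let Δ be a finite set, r ≥ 1, and T ≤ K ≤ Sym(Δ) with the same orbits on
Δ × Δ. Let H ≤ Sym({1,…,r}) and let G ≤ Sym(Δ^r) be such that: (1) every element of G is in
product-action form with base entries in K and top element in H; (2) G contains every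
permutation of product-action form with base entries in T and trivial top element; and
(3) for every h ∈ H there is an element of G in product-action form with top element h.
Then G has the same orbits on Δ^r × Δ^r as the full wreath product K ≀ H in product action
(equivalently, as T ≀ H). -/
theorem stmt_10 {Δ : Type*} [Finite Δ] (r : ℕ) (hr : 1 ≤ r)
    (T K : Subgroup (Equiv.Perm Δ)) (hTK : T ≤ K)
    (horb : ∀ a b c d : Δ, (∃ t ∈ T, t a = c ∧ t b = d) ↔ (∃ g ∈ K, g a = c ∧ g b = d))
    (H : Subgroup (Equiv.Perm (Fin r)))
    (G : Subgroup (Equiv.Perm (Fin r → Δ)))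
    (h1 : ∀ g ∈ G, ∃ (k : Fin r → Equiv.Perm Δ) (h : Equiv.Perm (Fin r)),
        (∀ i, k i ∈ K) ∧ h ∈ H ∧ g = paPerm k h)
    (h2 : ∀ k : Fin r → Equiv.Perm Δ, (∀ i, k i ∈ T) → paPerm k 1 ∈ G)
    (h3 : ∀ h ∈ H, ∃ k : Fin r → Equiv.Perm Δ, paPerm k h ∈ G) :
    ∀ u v w z : Fin r → Δ,
      ((∃ g ∈ G, g u = w ∧ g v = z) ↔
        (∃ (k : Fin r → Equiv.Perm Δ) (h : Equiv.Perm (Fin r)),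
          (∀ i, k i ∈ K) ∧ h ∈ H ∧ paPerm k h u = w ∧ paPerm k h v = z)) ∧
      ((∃ g ∈ G, g u = w ∧ g v = z) ↔
        (∃ (k : Fin r → Equiv.Perm Δ) (h : Equiv.Perm (Fin r)),
          (∀ i, k i ∈ T) ∧ h ∈ H ∧ paPerm k h u = w ∧ paPerm k h v = z)) := by
  intro u v w z
  rcases subsingleton_or_nontrivial Δ with hs | hn
  · have hsub : Subsingleton (Fin r → Δ) := inferInstance
    refine ⟨⟨fun _ => ?_, fun _ => ?_⟩, ⟨fun _ => ?_, fun _ => ?_⟩⟩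
    · exact ⟨fun _ => 1, 1, fun i => K.one_mem, H.one_mem,
        Subsingleton.elim _ _, Subsingleton.elim _ _⟩
    · exact ⟨1, G.one_mem, Subsingleton.elim _ _, Subsingleton.elim _ _⟩
    · exact ⟨fun _ => 1, 1, fun i => T.one_mem, H.one_mem,
        Subsingleton.elim _ _, Subsingleton.elim _ _⟩
    · exact ⟨1, G.one_mem, Subsingleton.elim _ _, Subsingleton.elim _ _⟩
  · -- backward direction: any K-based product-action pair-mapping is realized in G
    have back : ∀ (k : Fin r → Equiv.Perm Δ) (h : Equiv.Perm (Fin r)),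
        (∀ i, k i ∈ K) → h ∈ H → paPerm k h u = w → paPerm k h v = z →
        ∃ g ∈ G, g u = w ∧ g v = z := by
      intro k h hkK hH hw hz
      obtain ⟨k', hk'G⟩ := h3 h hH
      obtain ⟨k'', h'', hk''K, _, heq⟩ := h1 _ hk'G
      have hh : h'' = h := (paPerm_top_eq heq).symm
      subst hh
      rw [heq] at hk'G
      have hchoice : ∀ j : Fin r, ∃ t ∈ T,
          t (u j) = (k'' (h'' j))⁻¹ (k (h'' j) (u j)) ∧
          t (v j) = (k'' (h'' j))⁻¹ (k (h'' j) (v j)) := by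
        intro j
        exact (horb _ _ _ _).mpr ⟨(k'' (h'' j))⁻¹ * k (h'' j),
          K.mul_mem (K.inv_mem (hk''K _)) (hkK _), rfl, rfl⟩
      choose t htT htu htv using hchoice
      refine ⟨paPerm k'' h'' * paPerm t 1, G.mul_mem hk'G (h2 t htT), ?_, ?_⟩
      · funext i
        have e : (paPerm k'' h'' * paPerm t 1) u i
            = k'' i (t (h''⁻¹ i) (u (h''⁻¹ i))) := rfl
        rw [e, htu, ← hw]
        simp [paPerm_apply]
      · funext i
        have e : (paPerm k'' h'' * paPerm t 1) v i
            = k'' i (t (h''⁻¹ i) (v (h''⁻¹ i))) := rfl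
        rw [e, htv, ← hz]
        simp [paPerm_apply]
    have fwdT : ∀ g ∈ G, g u = w → g v = z →
        ∃ (t : Fin r → Equiv.Perm Δ) (h : Equiv.Perm (Fin r)),
          (∀ i, t i ∈ T) ∧ h ∈ H ∧ paPerm t h u = w ∧ paPerm t h v = z := by
      intro g hg hw hz
      obtain ⟨k, h, hkK, hH, rfl⟩ := h1 g hg
      have hchoice : ∀ i : Fin r, ∃ t ∈ T, t (u (h⁻¹ i)) = w i ∧ t (v (h⁻¹ i)) = z i := by
        intro i
        exact (horb _ _ _ _).mpr ⟨k i, hkK i, by rw [← hw]; rfl, by rw [← hz]; rfl⟩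
      choose t htT htu htv using hchoice
      exact ⟨t, h, htT, hH, funext fun i => htu i, funext fun i => htv i⟩
    refine ⟨⟨?_, ?_⟩, ⟨?_, ?_⟩⟩
    · rintro ⟨g, hg, hw, hz⟩
      obtain ⟨k, h, hkK, hH, rfl⟩ := h1 g hg
      exact ⟨k, h, hkK, hH, hw, hz⟩
    · rintro ⟨k, h, hkK, hH, hw, hz⟩
      exact back k h hkK hH hw hz
    · rintro ⟨g, hg, hw, hz⟩
      exact fwdT g hg hw hz
    · rintro ⟨k, h, hkT, hH, hw, hz⟩
      exact back k h (fun i => hTK (hkT i)) hH hw hz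
end

section
/- Let Δ be a finite set with |Δ| = m ≥ 4, let r ≥ 1, let H be a transitive subgroup of Sym({1,…,r}), and let Γ be a digraph with vertex set Δ^r. Then every permutation of Δ^r in product-action form with base entries in Alt(Δ) and top element in H is an automorphism of Γ if and only if there exists an H-invariant set 𝒥 ⊆ {0,1}^r such that for all u, v ∈ Δ^r, (u,v) is an arc of Γ exactly when the pattern (ε_1,…,ε_r) ∈ 𝒥, where ε_i = 0 if u_i = v_i and ε_i = 1 if u_i ≠ v_i. In other words, the digraphs on Δ^r invariant under Alt(Δ) ≀ H in product action are precisely the generalised Hamming graphs H(r,m,𝒥) with 𝒥 an H-invariant subset of {0,1}^r. -/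
open MulAction

def diffPattern {Δ : Type*} [DecidableEq Δ] {r : ℕ} (u v : Fin r → Δ) : Fin r → Bool :=
  fun i => decide (u i ≠ v i)

lemma alternatingGroup_exists_apply_eq_of_eq_iff_eq {Δ : Type*} [Fintype Δ] [DecidableEq Δ]
    (hm : 4 ≤ Fintype.card Δ) {a b c d : Δ} (hpat : a = b ↔ c = d) :
    ∃ k ∈ alternatingGroup Δ, k a = c ∧ k b = d := by
  have : IsMultiplyPretransitive (alternatingGroup Δ) Δ 2 :=
    have := alternatingGroup.isMultiplyPretransitive Δ
    isMultiplyPretransitive_of_le (n := Nat.card Δ - 2)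
      (by rw [Nat.card_eq_fintype_card]; omega) (Nat.sub_le _ _)
  by_cases hab : a = b
  · obtain rfl := hab
    obtain rfl := hpat.mp rfl
    have := isPretransitive_of_is_two_pretransitive (G := alternatingGroup Δ) (α := Δ)
    obtain ⟨k, hk⟩ := exists_smul_eq (alternatingGroup Δ) a c
    exact ⟨k, k.2, hk, hk⟩
  · obtain ⟨k, hka, hkb⟩ := is_two_pretransitive_iff.mp this hab (hpat.not.mp hab)
    exact ⟨k, k.2, hka, hkb⟩

lemma diffPattern_paPerm {Δ : Type*} [DecidableEq Δ] {r : ℕ} (k : Fin r → Equiv.Perm Δ)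
    (h : Equiv.Perm (Fin r)) (u v : Fin r → Δ) :
    diffPattern (paPerm k h u) (paPerm k h v) = fun i => diffPattern u v (h⁻¹ i) := by
  funext i
  simp [diffPattern, paPerm]

lemma iff_of_diffPattern_eq {Δ : Type*} [Fintype Δ] [DecidableEq Δ] (hm : 4 ≤ Fintype.card Δ)
    {r : ℕ} {A : (Fin r → Δ) → (Fin r → Δ) → Prop}
    (hA : ∀ k : Fin r → Equiv.Perm Δ, (∀ i, k i ∈ alternatingGroup Δ) →
      ∀ u v, A u v ↔ A (paPerm k 1 u) (paPerm k 1 v))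
    {u v u' v' : Fin r → Δ} (hpat : diffPattern u v = diffPattern u' v') :
    A u v ↔ A u' v' := by
  have hpat_i : ∀ i, u i = v i ↔ u' i = v' i := fun i => by
    simpa [diffPattern] using congrFun hpat i
  choose k hk hku hkv using fun i =>
    alternatingGroup_exists_apply_eq_of_eq_iff_eq hm (hpat_i i)
  have hu : paPerm k 1 u = u' := funext fun i => by simp [paPerm, hku]
  have hv : paPerm k 1 v = v' := funext fun i => by simp [paPerm, hkv]
  rw [hA k hk u v, hu, hv]

theorem stmt_11_general {Δ : Type*} [Fintype Δ] [DecidableEq Δ] (hm : 4 ≤ Fintype.card Δ)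
    (r : ℕ) (H : Subgroup (Equiv.Perm (Fin r)))
    (A : (Fin r → Δ) → (Fin r → Δ) → Prop) :
    (∀ (k : Fin r → Equiv.Perm Δ) (h : Equiv.Perm (Fin r)),
        (∀ i, k i ∈ alternatingGroup Δ) → h ∈ H →
        ∀ u v, A u v ↔ A (paPerm k h u) (paPerm k h v))
      ↔ ∃ J : Set (Fin r → Bool),
          (∀ j ∈ J, ∀ h ∈ H, (fun i => j (h⁻¹ i)) ∈ J) ∧
          (∀ u v, A u v ↔ (fun i => decide (u i ≠ v i)) ∈ J) := by
  constructor
  · intro hA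
    have hbase := fun k hk => hA k 1 hk H.one_mem
    refine ⟨{j | ∃ u v, A u v ∧ diffPattern u v = j}, ?_,
      fun u v => ⟨fun huv => ⟨u, v, huv, rfl⟩, ?_⟩⟩
    · rintro _ ⟨u, v, huv, rfl⟩ h hh
      exact ⟨_, _, (hA 1 h (fun _ => one_mem _) hh u v).mp huv, diffPattern_paPerm 1 h u v⟩
    · rintro ⟨u', v', hu'v', hpat⟩
      exact (iff_of_diffPattern_eq hm hbase hpat).mp hu'v'
  · rintro ⟨J, hJ, hAJ⟩ k h _ hh u v
    rw [hAJ, hAJ]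
    change diffPattern u v ∈ J ↔ diffPattern (paPerm k h u) (paPerm k h v) ∈ J
    rw [diffPattern_paPerm]
    refine ⟨fun hj => hJ _ hj h hh, fun hj => ?_⟩
    simpa using hJ _ hj h⁻¹ (H.inv_mem hh)

/-- Let Δ be a finite set with |Δ| = m ≥ 4, let r ≥ 1, let H be a transitive
subgroup of Sym({1,…,r}), and let Γ be a digraph with vertex set Δ^r (arc relation A).
Then every permutation of Δ^r in product-action form with base entries in Alt(Δ) and top
element in H is an automorphism of Γ if and only if there exists an H-invariant set
𝒥 ⊆ {0,1}^r such that for all u, v ∈ Δ^r, (u,v) is an arc of Γ exactly when the pattern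
(ε_1,…,ε_r) ∈ 𝒥, where ε_i records whether u_i ≠ v_i. In other words, the digraphs on Δ^r
invariant under Alt(Δ) ≀ H in product action are precisely the generalised Hamming graphs
H(r,m,𝒥) with 𝒥 an H-invariant subset of {0,1}^r. -/
theorem stmt_11 {Δ : Type*} [Fintype Δ] [DecidableEq Δ] (hm : 4 ≤ Fintype.card Δ)
    (r : ℕ) (hr : 1 ≤ r) (H : Subgroup (Equiv.Perm (Fin r)))
    (hH : ∀ i j : Fin r, ∃ h ∈ H, h i = j)
    (A : (Fin r → Δ) → (Fin r → Δ) → Prop) :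
    (∀ (k : Fin r → Equiv.Perm Δ) (h : Equiv.Perm (Fin r)),
        (∀ i, k i ∈ alternatingGroup Δ) → h ∈ H →
        ∀ u v, A u v ↔ A (paPerm k h u) (paPerm k h v))
      ↔ ∃ J : Set (Fin r → Bool),
          (∀ j ∈ J, ∀ h ∈ H, (fun i => j (h⁻¹ i)) ∈ J) ∧
          (∀ u v, A u v ↔ (fun i => decide (u i ≠ v i)) ∈ J) :=
  stmt_11_general hm r H A
end

section
/- Let α, β > 0 be real numbers, let G be a transitive permutation group on a finite set Ω, and let x ∈ G be a nontrivial element whose support has size at most (1−α)|Ω|. If the stabilizer G_ω has order at most β for some ω ∈ Ω, then the conjugacy class of x in G has size |x^G| ≤ β/α. -/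
/-- Let α, β > 0 be real numbers, let G be a transitive permutation group on a
finite set Ω, and let x ∈ G be a nontrivial element whose support has size at most (1−α)|Ω|.
If the stabilizer G_ω has order at most β for some ω ∈ Ω, then the conjugacy class of x in G
has size |x^G| ≤ β/α. -/
theorem stmt_16 {Ω : Type*} [Fintype Ω] (α β : ℝ) (hα : 0 < α) (hβ : 0 < β)
    (G : Subgroup (Equiv.Perm Ω)) (htrans : MulAction.IsPretransitive G Ω)
    (x : G) (hx : x ≠ 1)
    (hsupp : (Nat.card {ω : Ω // (x : Equiv.Perm Ω) ω ≠ ω} : ℝ) ≤ (1 - α) * Fintype.card Ω)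
    (hstab : ∃ ω : Ω, (Nat.card (MulAction.stabilizer G ω) : ℝ) ≤ β) :
    (Nat.card {y : G | ∃ g : G, g⁻¹ * x * g = y} : ℝ) ≤ β / α := by
  classical
  haveI : Fintype G := Fintype.ofFinite G
  obtain ⟨ω₀, hω₀⟩ := hstab
  have hΩ : Nonempty Ω := by
    by_contra h
    rw [not_nonempty_iff] at h
    exact hx (Subtype.ext (Subsingleton.elim _ _))
  set n := Fintype.card Ω with hn_def
  have hn : 0 < n := Fintype.card_pos
  set k := (Finset.univ.filter (fun ω => (x : Equiv.Perm Ω) ω ≠ ω)).card with hk_def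
  have hk_eq : Nat.card {ω : Ω // (x : Equiv.Perm Ω) ω ≠ ω} = k := by
    simp [Nat.card_eq_fintype_card, Fintype.card_subtype, hk_def]
  set s : Finset G := Finset.univ.filter (fun y : G => ∃ g : G, g⁻¹ * x * g = y) with hs_def
  have hcard_s : Nat.card {y : G | ∃ g : G, g⁻¹ * x * g = y} = s.card := by
    simp [Nat.card_eq_fintype_card, Fintype.card_subtype, hs_def, Set.mem_setOf_eq]
  set m := Nat.card (MulAction.stabilizer G ω₀) with hm_def
  -- all stabilizers have card m
  have hstabcard : ∀ ω : Ω, Nat.card (MulAction.stabilizer G ω) = m := by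
    intro ω
    obtain ⟨g, hg⟩ := htrans.exists_smul_eq ω₀ ω
    have h1 := MulAction.stabilizer_smul_eq_stabilizer_map_conj g ω₀
    rw [hg] at h1
    rw [h1, hm_def]
    exact (Nat.card_congr ((MulAction.stabilizer G ω₀).equivMapOfInjective _
      (MulAut.conj g).injective).toEquiv).symm
  -- support of conjugate has same card
  have hsuppcard : ∀ y ∈ s,
      (Finset.univ.filter (fun ω => (y : Equiv.Perm Ω) ω ≠ ω)).card = k := by
    intro y hy
    rw [hs_def, Finset.mem_filter] at hy
    obtain ⟨-, g, hg⟩ := hy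
    subst hg
    rw [hk_def]
    apply Finset.card_bij (fun ω _ => (g : Equiv.Perm Ω) ω)
    · intro ω hω
      simp only [Finset.mem_filter, Finset.mem_univ, true_and] at hω ⊢
      intro hcon
      apply hω
      simp only [Subgroup.coe_mul, Subgroup.coe_inv, Equiv.Perm.mul_apply]
      rw [hcon]
      simp
    · intro a ha b hb hab
      exact (g : Equiv.Perm Ω).injective hab
    · intro b hb
      refine ⟨(g : Equiv.Perm Ω)⁻¹ b, ?_, by simp⟩
      simp only [Finset.mem_filter, Finset.mem_univ, true_and] at hb ⊢
      intro hcon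
      apply hb
      simp only [Subgroup.coe_mul, Subgroup.coe_inv, Equiv.Perm.mul_apply] at hcon
      have := congrArg (g : Equiv.Perm Ω) hcon
      simpa using this
  have hk_le : k ≤ n := by
    rw [hk_def]; exact (Finset.card_filter_le _ _).trans_eq (by simp [hn_def])
  -- fixed points count
  have hfix : ∀ y ∈ s,
      (Finset.univ.filter (fun ω => (y : Equiv.Perm Ω) ω = ω)).card = n - k := by
    intro y hy
    have h2 : (Finset.univ.filter (fun ω => (y : Equiv.Perm Ω) ω = ω)).card
        + (Finset.univ.filter (fun ω => (y : Equiv.Perm Ω) ω ≠ ω)).card = n := by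
      simpa [hn_def] using Finset.card_filter_add_card_filter_not
        (s := (Finset.univ : Finset Ω)) (p := fun ω => (y : Equiv.Perm Ω) ω = ω)
    have h3 := hsuppcard y hy
    omega
  -- key counting inequality
  have hkey : s.card * (n - k) ≤ n * m := by
    calc s.card * (n - k) = ∑ y ∈ s,
          (Finset.univ.filter (fun ω => (y : Equiv.Perm Ω) ω = ω)).card := by
          rw [Finset.sum_congr rfl hfix, Finset.sum_const, smul_eq_mul]
      _ = ∑ ω : Ω, (s.filter (fun y : G => (y : Equiv.Perm Ω) ω = ω)).card := by
          simp only [Finset.card_filter]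
          exact Finset.sum_comm
      _ ≤ ∑ _ω : Ω, m := by
          apply Finset.sum_le_sum
          intro ω _
          have hsub : s.filter (fun y : G => (y : Equiv.Perm Ω) ω = ω) ⊆
              Finset.univ.filter (fun y : G => (y : Equiv.Perm Ω) ω = ω) :=
            Finset.filter_subset_filter _ (Finset.subset_univ s)
          have ht : (Finset.univ.filter (fun y : G => (y : Equiv.Perm Ω) ω = ω)).card
              = Nat.card (MulAction.stabilizer G ω) := by
            rw [Nat.card_eq_fintype_card, Fintype.card_subtype]
            congr 1
          calc (s.filter _).card ≤ _ := Finset.card_le_card hsub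
            _ = m := by rw [ht, hstabcard ω]
      _ = n * m := by simp [hn_def, mul_comm]
  -- now real arithmetic
  rw [hcard_s]
  rw [hk_eq] at hsupp
  have hαn : α * n ≤ (n : ℝ) - k := by nlinarith [hsupp]
  have hcast : (s.card : ℝ) * ((n : ℝ) - k) ≤ (n : ℝ) * m := by
    have h4 : ((s.card * (n - k) : ℕ) : ℝ) ≤ ((n * m : ℕ) : ℝ) := Nat.cast_le.mpr hkey
    push_cast [Nat.cast_sub hk_le] at h4
    exact h4
  have h1 : (s.card : ℝ) * (α * n) ≤ (n : ℝ) * β := by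
    calc (s.card : ℝ) * (α * n) ≤ (s.card : ℝ) * ((n : ℝ) - k) := by
          apply mul_le_mul_of_nonneg_left hαn (Nat.cast_nonneg _)
      _ ≤ (n : ℝ) * m := hcast
      _ ≤ (n : ℝ) * β := by
          apply mul_le_mul_of_nonneg_left hω₀ (Nat.cast_nonneg _)
  rw [le_div_iff₀ hα]
  have hnpos : (0 : ℝ) < n := Nat.cast_pos.mpr hn
  nlinarith [h1]
end
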